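/- arXiv:2308.03335 — 2 statements merged into one kernel-verified Lean document; each statement's English description precedes it below -/
import Mathlib

section
/- Let D = (1/(2ℓ+1))·sin(Aα(2ℓ+1)/2)/sin(Aα/2) and ρ_θ = (1/2)[(1+D)|ψ_+⟩⟨ψ_+| + (1−D)|ψ_−⟩⟨ψ_−|] with ψ_± = (|0⟩ ± e^{iAθ}|1⟩)/√2. Then L_θ = iAD(|ψ_+⟩⟨ψ_−| − |ψ_−⟩⟨ψ_+|) satisfies ∂_θ ρ_θ = (ρ_θ L_θ + L_θ ρ_θ)/2, and the SLD Fisher information tr[ρ_θ L_θ²] equals A²D². -/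
/-!
In the basis `|0⟩, |1⟩` one has `ρ_θ = ½·1 + (D/2)·M(iAθ)` and `L_θ = iAD·N(iAθ)`, where
`M(z) = [[0, e^{-z}], [e^z, 0]]` and `N(z) = [[0, -e^{-z}], [e^z, 0]] = dM/dz`.
Since `M` and `N` anticommute, `ρ_θ L_θ + L_θ ρ_θ = L_θ = 2 ∂_θ ρ_θ`; since `N² = -1`,
`L_θ² = A²D²·1`, so `tr[ρ_θ L_θ²] = A²D² tr ρ_θ = A²D²`.
-/

/-- `ψ_± = (|0⟩ ± e^{iAθ}|1⟩)/√2`. -/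
noncomputable def psiPM (A θ : ℝ) (s : Bool) : Fin 2 → ℂ :=
  ![1 / Real.sqrt 2, (if s then 1 else -1) * Complex.exp (Complex.I * (A : ℂ) * (θ : ℂ)) / Real.sqrt 2]

/-- Dephasing factor `D = (1/(2ℓ+1))·sin(Aα(2ℓ+1)/2)/sin(Aα/2)`. -/
noncomputable def dephD (A α : ℝ) (ℓ : ℕ) : ℝ :=
  (1 / (2 * (ℓ : ℝ) + 1)) * (Real.sin (A * α * (2 * (ℓ : ℝ) + 1) / 2) / Real.sin (A * α / 2))

/-- The effective single-atom state of a `(2ℓ+1)`-layer clock: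
`ρ_θ = (1/2)[(1+D)|ψ_+⟩⟨ψ_+| + (1−D)|ψ_−⟩⟨ψ_−|]`. -/
noncomputable def rhoMix (A α : ℝ) (ℓ : ℕ) (θ : ℝ) : Matrix (Fin 2) (Fin 2) ℂ :=
  (((1 + dephD A α ℓ) / 2 : ℝ) : ℂ) •
      Matrix.vecMulVec (psiPM A θ true) (fun j => star (psiPM A θ true j)) +
    (((1 - dephD A α ℓ) / 2 : ℝ) : ℂ) •
      Matrix.vecMulVec (psiPM A θ false) (fun j => star (psiPM A θ false j))

/-- The SLD `L_θ = iAD(|ψ_+⟩⟨ψ_−| − |ψ_−⟩⟨ψ_+|)`. -/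
noncomputable def sldMix (A α : ℝ) (ℓ : ℕ) (θ : ℝ) : Matrix (Fin 2) (Fin 2) ℂ :=
  (Complex.I * (A : ℂ) * ((dephD A α ℓ : ℝ) : ℂ)) •
    (Matrix.vecMulVec (psiPM A θ true) (fun j => star (psiPM A θ false j)) -
      Matrix.vecMulVec (psiPM A θ false) (fun j => star (psiPM A θ true j)))

open Complex Matrix

noncomputable section

def offDiagExp (z : ℂ) : Matrix (Fin 2) (Fin 2) ℂ := !![0, exp (-z); exp z, 0]

def offDiagExpSkew (z : ℂ) : Matrix (Fin 2) (Fin 2) ℂ := !![0, -exp (-z); exp z, 0]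

end

theorem offDiagExp_mul_offDiagExpSkew_add (z : ℂ) :
    offDiagExp z * offDiagExpSkew z + offDiagExpSkew z * offDiagExp z = 0 := by
  ext i j
  fin_cases i <;> fin_cases j <;> simp [offDiagExp, offDiagExpSkew]

theorem offDiagExpSkew_mul_self (z : ℂ) : offDiagExpSkew z * offDiagExpSkew z = -1 := by
  ext i j
  fin_cases i <;> fin_cases j <;> simp [offDiagExpSkew, ← exp_add]

theorem trace_offDiagExp (z : ℂ) : (offDiagExp z).trace = 0 := by
  simp [offDiagExp, trace_fin_two]

theorem hasDerivAt_offDiagExp_apply (c : ℂ) (θ : ℝ) (i j : Fin 2) :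
    HasDerivAt (fun t : ℝ => offDiagExp (c * t) i j) (c * offDiagExpSkew (c * θ) i j) θ := by
  have hexp (b : ℂ) : HasDerivAt (fun t : ℝ => exp (b * t)) (b * exp (b * θ)) θ := by
    simpa [mul_comm] using ((hasDerivAt_id (θ : ℂ)).const_mul b).cexp.comp_ofReal
  fin_cases i <;> fin_cases j
  · simpa [offDiagExp, offDiagExpSkew] using hasDerivAt_const θ (0 : ℂ)
  · simpa [offDiagExp, offDiagExpSkew, ← neg_mul] using hexp (-c)
  · simpa [offDiagExp, offDiagExpSkew] using hexp c
  · simpa [offDiagExp, offDiagExpSkew] using hasDerivAt_const θ (0 : ℂ)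

theorem smul_one_add_smul_mul_add_mul_smul_one_add_smul {K R : Type*} [CommSemiring K]
    [Semiring R] [Algebra K R] {m l : R} (h : m * l + l * m = 0) (a c : K) :
    (a • 1 + c • m) * l + l * (a • 1 + c • m) = (2 * a) • l := by
  simp only [add_mul, mul_add, smul_mul_assoc, mul_smul_comm, one_mul, mul_one]
  rw [add_add_add_comm, ← smul_add c, h, smul_zero, add_zero, ← add_smul, two_mul]

theorem vecMulVec_psiPM (A θ : ℝ) (s t : Bool) :
    vecMulVec (psiPM A θ s) (fun j => star (psiPM A θ t j)) =
      (1 / 2 : ℂ) • !![1, (if t then 1 else -1) * exp (-(I * A * θ));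
        (if s then 1 else -1) * exp (I * A * θ), (if s then 1 else -1) * (if t then 1 else -1)] := by
  have hsqrt : ((√2 : ℝ) : ℂ)⁻¹ * ((√2 : ℝ) : ℂ)⁻¹ = 1 / 2 := by
    rw [← mul_inv, ← ofReal_mul, Real.mul_self_sqrt zero_le_two]; norm_num
  have hconj : starRingEnd ℂ (exp (I * A * θ)) = exp (-(I * A * θ)) := by
    rw [← exp_conj]; simp [conj_ofReal]
  have hunit : exp (I * A * θ) * exp (-(I * A * θ)) = 1 := by
    rw [← exp_add, add_neg_cancel, exp_zero]
  ext i j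
  cases s <;> cases t <;> fin_cases i <;> fin_cases j <;>
    simp [psiPM, vecMulVec_apply, hconj, div_eq_mul_inv] <;> grind

theorem rhoMix_eq (A α : ℝ) (ℓ : ℕ) (θ : ℝ) :
    rhoMix A α ℓ θ = (1 / 2 : ℂ) • 1 + ((dephD A α ℓ : ℂ) / 2) • offDiagExp (I * A * θ) := by
  rw [rhoMix, vecMulVec_psiPM, vecMulVec_psiPM]
  ext i j
  fin_cases i <;> fin_cases j <;> simp [offDiagExp] <;> ring

theorem sldMix_eq (A α : ℝ) (ℓ : ℕ) (θ : ℝ) :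
    sldMix A α ℓ θ = (I * A * dephD A α ℓ) • offDiagExpSkew (I * A * θ) := by
  rw [sldMix, vecMulVec_psiPM, vecMulVec_psiPM]
  ext i j
  fin_cases i <;> fin_cases j <;> simp [offDiagExpSkew, -mul_eq_mul_left_iff] <;> ring

theorem rhoMix_mul_sldMix_add_sldMix_mul_rhoMix (A α : ℝ) (ℓ : ℕ) (θ : ℝ) :
    rhoMix A α ℓ θ * sldMix A α ℓ θ + sldMix A α ℓ θ * rhoMix A α ℓ θ = sldMix A α ℓ θ := by
  have hanti : offDiagExp (I * A * θ) * sldMix A α ℓ θ + sldMix A α ℓ θ * offDiagExp (I * A * θ)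
      = 0 := by
    rw [sldMix_eq, mul_smul_comm, smul_mul_assoc, ← smul_add,
      offDiagExp_mul_offDiagExpSkew_add, smul_zero]
  rw [rhoMix_eq, smul_one_add_smul_mul_add_mul_smul_one_add_smul hanti]
  norm_num

theorem sldMix_mul_self (A α : ℝ) (ℓ : ℕ) (θ : ℝ) :
    sldMix A α ℓ θ * sldMix A α ℓ θ = ((A : ℂ) ^ 2 * (dephD A α ℓ : ℂ) ^ 2) • 1 := by
  rw [sldMix_eq, smul_mul_smul, offDiagExpSkew_mul_self, smul_neg, ← neg_smul]
  congr 1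
  linear_combination (-(A : ℂ) ^ 2 * (dephD A α ℓ : ℂ) ^ 2) * I_sq

theorem trace_rhoMix (A α : ℝ) (ℓ : ℕ) (θ : ℝ) : (rhoMix A α ℓ θ).trace = 1 := by
  rw [rhoMix_eq, trace_add, trace_smul, trace_smul, trace_offDiagExp, trace_one]
  norm_num

theorem sld_equation_and_fisher_mix_general (A α : ℝ) (ℓ : ℕ)
    (θ : ℝ) :
    (∀ i j : Fin 2,
        HasDerivAt (fun t : ℝ => rhoMix A α ℓ t i j)
          ((1/2 : ℂ) *
            ((rhoMix A α ℓ θ * sldMix A α ℓ θ + sldMix A α ℓ θ * rhoMix A α ℓ θ) i j)) θ) ∧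
      (rhoMix A α ℓ θ * (sldMix A α ℓ θ * sldMix A α ℓ θ)).trace =
        ((A : ℂ))^2 * ((dephD A α ℓ : ℝ) : ℂ)^2 := by
  refine ⟨fun i j => ?_, ?_⟩
  · rw [rhoMix_mul_sldMix_add_sldMix_mul_rhoMix]
    simp only [rhoMix_eq, sldMix_eq, Matrix.add_apply, Matrix.smul_apply, smul_eq_mul]
    exact (((hasDerivAt_offDiagExp_apply (I * A) θ i j).const_mul
      ((dephD A α ℓ : ℂ) / 2)).const_add _).congr_deriv (by ring)
  · rw [sldMix_mul_self, mul_smul_comm, mul_one, trace_smul, trace_rhoMix, smul_eq_mul, mul_one]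

/-- `L_θ` satisfies the SLD equation `∂_θ ρ_θ = (ρ_θ L_θ + L_θ ρ_θ)/2` (entrywise),
and the SLD Fisher information `tr[ρ_θ L_θ²]` equals `A²D²`. -/
theorem sld_equation_and_fisher_mix (A α : ℝ) (ℓ : ℕ) (h : Real.sin (A * α / 2) ≠ 0)
    (θ : ℝ) :
    (∀ i j : Fin 2,
        HasDerivAt (fun t : ℝ => rhoMix A α ℓ t i j)
          ((1/2 : ℂ) *
            ((rhoMix A α ℓ θ * sldMix A α ℓ θ + sldMix A α ℓ θ * rhoMix A α ℓ θ) i j)) θ) ∧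
      (rhoMix A α ℓ θ * (sldMix A α ℓ θ * sldMix A α ℓ θ)).trace =
        ((A : ℂ))^2 * ((dephD A α ℓ : ℝ) : ℂ)^2 :=
  sld_equation_and_fisher_mix_general A α ℓ θ
end

section
/- For the family of densities f_θ(φ) = (1/(2π))(1 + cos(Aθ − φ)) on [0,2π), the classical Fisher information I(θ) = ∫₀^{2π} (∂_θ ln f_θ(φ))² f_θ(φ) dφ equals A². -/
/-!
Where `f_θ` does not vanish, `sin² = (1 - cos)(1 + cos)` turns the integrand into
`A² (1 - cos (Aθ - φ)) / (2π)`, and `f_θ` vanishes only on a countable, hence null, set.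
The cosine term integrates to zero over a full period, leaving `A²`.
-/

open MeasureTheory Real

lemma Real.countable_setOf_cos_eq_neg_one : {x : ℝ | cos x = -1}.Countable :=
  (Set.countable_range fun k : ℤ => π + k * (2 * π)).mono fun _ hx => cos_eq_neg_one_iff.mp hx

lemma Real.ae_one_add_cos_sub_ne_zero (c : ℝ) : ∀ᵐ φ : ℝ, 1 + cos (c - φ) ≠ 0 := by
  have hcount : {φ : ℝ | cos (c - φ) = -1}.Countable :=
    countable_setOf_cos_eq_neg_one.preimage (sub_right_injective (b := c))
  filter_upwards [hcount.ae_notMem volume] with φ hφ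
  simpa [add_eq_zero_iff_eq_neg'] using hφ

lemma Real.sin_sq_div_one_add_cos {x : ℝ} (h : 1 + cos x ≠ 0) :
    sin x ^ 2 / (1 + cos x) = 1 - cos x := by
  rw [div_eq_iff h, sin_sq]
  ring

lemma Real.integral_cos_sub_zero_two_pi (c : ℝ) : ∫ φ in (0 : ℝ)..2 * π, cos (c - φ) = 0 := by
  simp [intervalIntegral.integral_comp_sub_left (fun x => cos x) c, sin_sub_two_pi]

/-- The classical Fisher information of the family `f_θ(φ) = (1/(2π))(1 + cos(Aθ − φ))`,
`I(θ) = ∫₀^{2π} (A sin(Aθ−φ))²/(1+cos(Aθ−φ)) dφ/(2π)` (integrand extended by `0` where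
`f_θ` vanishes, as is the convention for division by zero), equals `A²`. -/
theorem covariant_fisher_info (A θ : ℝ) :
    (∫ φ in (0 : ℝ)..(2 * Real.pi),
        (A * Real.sin (A * θ - φ))^2 / (1 + Real.cos (A * θ - φ)) * (1 / (2 * Real.pi)))
      = A^2 := by
  have hcos : IntervalIntegrable (fun φ => cos (A * θ - φ)) volume 0 (2 * π) :=
    (continuous_cos.comp (continuous_const.sub continuous_id)).intervalIntegrable _ _
  calc (∫ φ in (0 : ℝ)..2 * π,
          (A * sin (A * θ - φ)) ^ 2 / (1 + cos (A * θ - φ)) * (1 / (2 * π)))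
      = ∫ φ in (0 : ℝ)..2 * π, A ^ 2 / (2 * π) * (1 - cos (A * θ - φ)) := by
        refine intervalIntegral.integral_congr_ae ?_
        filter_upwards [ae_one_add_cos_sub_ne_zero (A * θ)] with φ hφ _
        rw [mul_pow, mul_div_assoc, sin_sq_div_one_add_cos hφ]
        ring
    _ = A ^ 2 / (2 * π) * (2 * π) := by
        rw [intervalIntegral.integral_const_mul, intervalIntegral.integral_sub
          intervalIntegrable_const hcos, integral_cos_sub_zero_two_pi]
        simp
    _ = A ^ 2 := div_mul_cancel₀ _ (by positivity)
end
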